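/- arXiv:1511.06525 — 5 statements merged into one kernel-verified Lean document; each statement's English description precedes it below -/
import Mathlib

section
/- Consider the block model with treatments 0,1,…,n (placebo and n ≥ 2 doses) and t cohorts, with NO dose-escalation constraints: a design is any function ξ : {0,…,n}×{1,…,t} → ℝ with ξ(i,k) ≥ 0 and ∑_{i,k} ξ(i,k) = 1. If a design ξ maximizes λ_min(N_A(ξ)) among all such designs, then its treatment proportions satisfy r_0(ξ) = 1/2 and r_i(ξ) = 1/(2n) for every i = 1,…,n. -/
/-!
Over the cohorts, Cauchy–Schwarz gives `xᵀ N_A(ξ) x ≤ ∑ ρᵢ xᵢ² - (∑ ρᵢ xᵢ)²` with `ρᵢ = r_i(ξ)`,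
with equality for designs supported on a single cohort. The single-cohort design with
`r₀ = 1/2`, `rᵢ = 1/(2n)` has `λ_min ≥ 1/(4n)`, so at an optimal design `λ = λ_min ≥ 1/(4n)` and
`Q(x) = ∑ ρᵢ xᵢ² - (∑ ρᵢ xᵢ)² - λ ∑ xᵢ²` is a nonnegative quadratic form. At `x = 1` this reads
`nλ ≤ R - R² ≤ 1/4` with `R = ∑ ρᵢ`, which forces `R = 1/2` and `Q(1) = 0`. Hence `1` minimizes
`Q`, so the gradient of `Q` vanishes there: `ρᵢ (1 - R) = λ`, i.e. `ρᵢ = 2λ = 1/(2n)`.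
-/

noncomputable section

open Matrix Finset

/-- An approximate design on treatments 0,…,n and cohorts 1,…,t:
nonnegative weights summing to 1. -/
def isDesign (n t : ℕ) (ξ : Fin (n+1) → Fin t → ℝ) : Prop :=
  (∀ i k, 0 ≤ ξ i k) ∧ ∑ i, ∑ k, ξ i k = 1

/-- Treatment proportions r_i(ξ). -/
def repl (n t : ℕ) (ξ : Fin (n+1) → Fin t → ℝ) (i : Fin (n+1)) : ℝ := ∑ k, ξ i k

/-- Cohort proportions s_k(ξ). -/
def coh (n t : ℕ) (ξ : Fin (n+1) → Fin t → ℝ) (k : Fin t) : ℝ := ∑ i, ξ i k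

/-- The information matrix N_A(ξ) for comparing the doses with the placebo:
the n×n submatrix of M_τ(ξ) = diag(r(ξ)) − X(ξ) D(ξ) X(ξ)^T obtained by deleting
the row and column of treatment 0, where D(ξ) has k-th diagonal entry 1/s_k(ξ)
if s_k(ξ) > 0 and 0 otherwise. -/
def NAgen (n t : ℕ) (ξ : Fin (n+1) → Fin t → ℝ) : Matrix (Fin n) (Fin n) ℝ :=
  fun i j => (if i = j then repl n t ξ i.succ else 0) -
    ∑ k, (if 0 < coh n t ξ k then (coh n t ξ k)⁻¹ else 0) * (ξ i.succ k * ξ j.succ k)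

/-- Smallest eigenvalue of a real symmetric matrix, via the Rayleigh quotient. -/
def lambdaMin {m : ℕ} (A : Matrix (Fin m) (Fin m) ℝ) : ℝ :=
  sInf { r : ℝ | ∃ x : Fin m → ℝ, ∑ i, x i ^ 2 = 1 ∧ r = ∑ i, ∑ j, x i * A i j * x j }

lemma lambdaMin_bddBelow {m : ℕ} (A : Matrix (Fin m) (Fin m) ℝ) :
    BddBelow { r : ℝ | ∃ x : Fin m → ℝ, ∑ i, x i ^ 2 = 1 ∧ r = ∑ i, ∑ j, x i * A i j * x j } := by
  refine ⟨-∑ i, ∑ j, |A i j|, ?_⟩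
  rintro r ⟨x, hx, rfl⟩
  have hx_le : ∀ i, |x i| ≤ 1 := fun i => by
    rw [← abs_one, ← sq_le_sq, one_pow, ← hx]
    exact Finset.single_le_sum (fun j _ => sq_nonneg (x j)) (mem_univ i)
  rw [← Finset.sum_neg_distrib]
  refine Finset.sum_le_sum fun i _ => ?_
  rw [← Finset.sum_neg_distrib]
  refine Finset.sum_le_sum fun j _ => neg_le_of_abs_le ?_
  rw [abs_mul, abs_mul]
  calc |x i| * |A i j| * |x j| ≤ 1 * |A i j| * 1 := by gcongr <;> exact hx_le _
    _ = |A i j| := by ring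

lemma lambdaMin_le {m : ℕ} (A : Matrix (Fin m) (Fin m) ℝ) {x : Fin m → ℝ}
    (hx : ∑ i, x i ^ 2 = 1) : lambdaMin A ≤ ∑ i, ∑ j, x i * A i j * x j :=
  csInf_le (lambdaMin_bddBelow A) ⟨x, hx, rfl⟩

lemma le_lambdaMin {m : ℕ} [NeZero m] (A : Matrix (Fin m) (Fin m) ℝ) {c : ℝ}
    (h : ∀ x : Fin m → ℝ, ∑ i, x i ^ 2 = 1 → c ≤ ∑ i, ∑ j, x i * A i j * x j) :
    c ≤ lambdaMin A := by
  refine le_csInf ⟨_, Pi.single 0 1, by simp [sq, Pi.single_apply], rfl⟩ ?_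
  rintro r ⟨x, hx, rfl⟩
  exact h x hx

lemma lambdaMin_mul_sum_sq_le {m : ℕ} (A : Matrix (Fin m) (Fin m) ℝ) (x : Fin m → ℝ) :
    lambdaMin A * ∑ i, x i ^ 2 ≤ ∑ i, ∑ j, x i * A i j * x j := by
  set c := ∑ i, x i ^ 2
  rcases (Finset.sum_nonneg fun i _ => sq_nonneg (x i) : 0 ≤ c).eq_or_lt with hc | hc
  · have hx : x = 0 := funext fun i =>
      pow_eq_zero_iff two_ne_zero |>.mp <|
        (Finset.sum_eq_zero_iff_of_nonneg fun j _ => sq_nonneg (x j)).mp hc.symm i (mem_univ i)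
    simp [hx, c]
  · have hsqrt : Real.sqrt c ^ 2 = c := Real.sq_sqrt hc.le
    have hu : ∑ i, ((Real.sqrt c)⁻¹ * x i) ^ 2 = 1 := by
      simp only [mul_pow, inv_pow, hsqrt, ← Finset.mul_sum]
      exact inv_mul_cancel₀ hc.ne'
    have key := lambdaMin_le A hu
    have hquad : ∑ i, ∑ j, (Real.sqrt c)⁻¹ * x i * A i j * ((Real.sqrt c)⁻¹ * x j)
        = c⁻¹ * ∑ i, ∑ j, x i * A i j * x j := by
      have hinv : (Real.sqrt c)⁻¹ * (Real.sqrt c)⁻¹ = c⁻¹ := by rw [← mul_inv, ← sq, hsqrt]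
      simp only [Finset.mul_sum]
      exact Finset.sum_congr rfl fun i _ => Finset.sum_congr rfl fun j _ => by
        linear_combination (x i * A i j * x j) * hinv
    rw [hquad, ← div_eq_inv_mul, le_div_iff₀ hc] at key
    exact key

lemma sq_sum_le_sum_inv_mul_sq {ι : Type*} [Fintype ι] {s b : ι → ℝ} (hs : ∀ k, 0 ≤ s k)
    (hs_sum : ∑ k, s k = 1) (hb : ∀ k, s k = 0 → b k = 0) :
    (∑ k, b k) ^ 2 ≤ ∑ k, (if 0 < s k then (s k)⁻¹ else 0) * b k ^ 2 := by
  have h := Finset.sum_sq_le_sum_mul_sum_of_sq_le_mul univ (r := b)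
    (f := fun k => (if 0 < s k then (s k)⁻¹ else 0) * b k ^ 2) (g := s)
    (fun k _ => mul_nonneg (by split_ifs <;> simp [hs k]) (sq_nonneg _)) (fun k _ => hs k)
    fun k _ => by
      rcases (hs k).eq_or_lt with hk | hk
      · simp [hb k hk.symm]
      · rw [if_pos hk, mul_right_comm, inv_mul_cancel₀ hk.ne', one_mul]
  rwa [hs_sum, mul_one] at h

section Design

variable {n t : ℕ} {ξ : Fin (n+1) → Fin t → ℝ}

lemma isDesign.coh_nonneg (hξ : isDesign n t ξ) (k : Fin t) : 0 ≤ coh n t ξ k :=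
  Finset.sum_nonneg fun i _ => hξ.1 i k

lemma isDesign.sum_coh (hξ : isDesign n t ξ) : ∑ k, coh n t ξ k = 1 := by
  rw [← hξ.2]; exact Finset.sum_comm

lemma isDesign.eq_zero_of_coh_eq_zero (hξ : isDesign n t ξ) {k : Fin t} (h : coh n t ξ k = 0)
    (i : Fin (n+1)) : ξ i k = 0 :=
  (Finset.sum_eq_zero_iff_of_nonneg fun i _ => hξ.1 i k).mp h i (mem_univ i)

lemma isDesign.repl_zero_add_sum_repl_succ (hξ : isDesign n t ξ) :
    repl n t ξ 0 + ∑ i : Fin n, repl n t ξ i.succ = 1 := by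
  rw [← Fin.sum_univ_succ]; exact hξ.2

lemma quadForm_NAgen (x : Fin n → ℝ) :
    ∑ i, ∑ j, x i * NAgen n t ξ i j * x j
      = ∑ i, repl n t ξ i.succ * x i ^ 2 -
        ∑ k, (if 0 < coh n t ξ k then (coh n t ξ k)⁻¹ else 0) * (∑ i, x i * ξ i.succ k) ^ 2 := by
  simp only [NAgen, mul_sub, sub_mul, Finset.sum_sub_distrib]
  congr 1
  · simp [mul_ite, Finset.sum_ite_eq, sq, mul_comm, mul_left_comm]
  · simp only [sq, Finset.mul_sum, Finset.sum_mul]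
    conv_rhs => rw [Finset.sum_comm]; enter [2, i]; rw [Finset.sum_comm]
    exact Finset.sum_congr rfl fun i _ => Finset.sum_congr rfl fun j _ =>
      Finset.sum_congr rfl fun k _ => by ring

lemma quadForm_NAgen_le (hξ : isDesign n t ξ) (x : Fin n → ℝ) :
    ∑ i, ∑ j, x i * NAgen n t ξ i j * x j
      ≤ ∑ i, repl n t ξ i.succ * x i ^ 2 - (∑ i, repl n t ξ i.succ * x i) ^ 2 := by
  have hsum : ∑ k, ∑ i, x i * ξ i.succ k = ∑ i, repl n t ξ i.succ * x i := by
    rw [Finset.sum_comm]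
    exact Finset.sum_congr rfl fun i _ => by
      rw [repl, Finset.sum_mul]; exact Finset.sum_congr rfl fun k _ => mul_comm _ _
  rw [quadForm_NAgen, ← hsum]
  gcongr
  -- Cauchy–Schwarz over the cohorts, weighted by the cohort proportions
  exact sq_sum_le_sum_inv_mul_sq hξ.coh_nonneg hξ.sum_coh fun k hk =>
    Finset.sum_eq_zero fun i _ => by rw [hξ.eq_zero_of_coh_eq_zero hk, mul_zero]

end Design

section OneCohort

variable {n t : ℕ} (w : Fin (n+1) → ℝ) (k₀ : Fin t)

def oneCohortDesign : Fin (n+1) → Fin t → ℝ := fun i => Pi.single k₀ (w i)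

lemma isDesign_oneCohortDesign (hw : ∀ i, 0 ≤ w i) (hw_sum : ∑ i, w i = 1) :
    isDesign n t (oneCohortDesign w k₀) :=
  ⟨fun i k => by unfold oneCohortDesign; rw [Pi.single_apply]; split_ifs <;> simp [hw i],
    by simpa [oneCohortDesign, Pi.single_apply] using hw_sum⟩

lemma repl_oneCohortDesign (i : Fin (n+1)) : repl n t (oneCohortDesign w k₀) i = w i := by
  simp [repl, oneCohortDesign, Pi.single_apply]

lemma coh_oneCohortDesign_self : coh n t (oneCohortDesign w k₀) k₀ = ∑ i, w i := by
  simp [coh, oneCohortDesign]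

lemma quadForm_NAgen_oneCohortDesign (hw_sum : ∑ i, w i = 1) (x : Fin n → ℝ) :
    ∑ i, ∑ j, x i * NAgen n t (oneCohortDesign w k₀) i j * x j
      = ∑ i, w i.succ * x i ^ 2 - (∑ i, w i.succ * x i) ^ 2 := by
  rw [quadForm_NAgen]
  simp [repl_oneCohortDesign, coh_oneCohortDesign_self, hw_sum, oneCohortDesign, Pi.single_apply,
    mul_comm]

end OneCohort

lemma exists_isDesign_le_lambdaMin {n t : ℕ} (hn : 0 < n) (ht : 0 < t) :
    ∃ ξ, isDesign n t ξ ∧ 1 / (4 * n) ≤ lambdaMin (NAgen n t ξ) := by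
  have : NeZero n := ⟨hn.ne'⟩
  have hn' : (0 : ℝ) < n := Nat.cast_pos.mpr hn
  set w : Fin (n+1) → ℝ := Fin.cons (1 / 2) fun _ => 1 / (2 * n)
  have hw_sum : ∑ i, w i = 1 := by
    simp only [w, Fin.sum_univ_succ, Fin.cons_zero, Fin.cons_succ, Finset.sum_const,
      Finset.card_univ, Fintype.card_fin, nsmul_eq_mul]
    field_simp; ring
  have hw : ∀ i, 0 ≤ w i :=
    Fin.cases (by simp [w]) fun i => by simp only [w, Fin.cons_succ]; positivity
  refine ⟨oneCohortDesign w ⟨0, ht⟩, isDesign_oneCohortDesign w _ hw hw_sum,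
    le_lambdaMin _ fun x hx => ?_⟩
  have hS : (∑ i, x i) ^ 2 ≤ n := by
    simpa [hx] using sq_sum_le_card_mul_sum_sq (s := univ) (f := x)
  rw [quadForm_NAgen_oneCohortDesign w _ hw_sum]
  simp only [w, Fin.cons_succ, ← Finset.mul_sum, hx]
  calc (1 : ℝ) / (4 * n) = 1 / (2 * n) * 1 - (1 / (2 * n)) ^ 2 * n := by field_simp; ring
    _ ≤ _ := by rw [mul_pow]; gcongr

section QuadraticBound

variable {ι : Type*} [Fintype ι] {ρ : ι → ℝ} {L : ℝ}

lemma mul_card_le_sum_sub_sq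
    (h : ∀ x : ι → ℝ, L * ∑ i, x i ^ 2 ≤ ∑ i, ρ i * x i ^ 2 - (∑ i, ρ i * x i) ^ 2) :
    L * Fintype.card ι ≤ ∑ i, ρ i - (∑ i, ρ i) ^ 2 := by
  simpa using h 1

lemma mul_one_sub_sum_eq [DecidableEq ι]
    (h : ∀ x : ι → ℝ, L * ∑ i, x i ^ 2 ≤ ∑ i, ρ i * x i ^ 2 - (∑ i, ρ i * x i) ^ 2)
    (h_one : L * Fintype.card ι = ∑ i, ρ i - (∑ i, ρ i) ^ 2) (i : ι) :
    ρ i * (1 - ∑ j, ρ j) = L := by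
  -- `h_one` says that `1` is a zero of the nonnegative quadratic form `h`; expanding it at
  -- `1 + s • eᵢ` leaves a quadratic in `s` without constant term, whose linear term must vanish.
  have hquad : ∀ s : ℝ, 0 ≤ (ρ i - ρ i ^ 2 - L) * (s * s) + 2 * (ρ i * (1 - ∑ j, ρ j) - L) * s
      + 0 := fun s => by
    have := h (1 + Pi.single i s)
    simp only [Pi.add_apply, Pi.one_apply, Pi.single_apply, add_sq, one_pow, mul_one, mul_ite,
      mul_zero, ite_pow, ne_eq, OfNat.ofNat_ne_zero, not_false_eq_true, zero_pow, sum_add_distrib,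
      sum_const, card_univ, nsmul_eq_mul, sum_ite_eq', mem_univ, ↓reduceIte, mul_add] at this
    nlinarith
  have := discrim_le_zero hquad
  rw [discrim] at this
  nlinarith [sq_nonneg (ρ i * (1 - ∑ j, ρ j) - L)]

lemma sum_eq_half_and_eq_inv_two_mul_card [DecidableEq ι] [Nonempty ι]
    (hL : 1 / (4 * Fintype.card ι) ≤ L)
    (h : ∀ x : ι → ℝ, L * ∑ i, x i ^ 2 ≤ ∑ i, ρ i * x i ^ 2 - (∑ i, ρ i * x i) ^ 2) :
    ∑ i, ρ i = 1 / 2 ∧ ∀ i, ρ i = 1 / (2 * Fintype.card ι) := by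
  have hN : (0 : ℝ) < Fintype.card ι := Nat.cast_pos.mpr Fintype.card_pos
  have hLN : 1 / 4 ≤ L * Fintype.card ι := by
    rw [div_le_iff₀ (by positivity)] at hL; linarith
  have h_one := mul_card_le_sum_sub_sq h
  have hR : ∑ i, ρ i = 1 / 2 := by nlinarith [sq_nonneg (∑ i, ρ i - 1 / 2)]
  refine ⟨hR, fun i => ?_⟩
  have hLN' : L * Fintype.card ι = 1 / 4 := by rw [hR] at h_one; linarith
  have hρ := mul_one_sub_sum_eq h (by rw [hLN', hR]; norm_num) i
  rw [hR] at hρ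
  rw [eq_div_iff (by positivity)]
  linear_combination (4 * (Fintype.card ι : ℝ)) * hρ + 4 * hLN'

end QuadraticBound

/-- If a design maximizes λ_min(N_A(·)) among all designs (no dose-escalation
constraints), then r_0 = 1/2 and r_i = 1/(2n) for i = 1,…,n. -/
theorem stmt0 (n t : ℕ) (hn : 2 ≤ n) (ht : 1 ≤ t)
    (ξ : Fin (n+1) → Fin t → ℝ) (hξ : isDesign n t ξ)
    (hopt : ∀ ξ' : Fin (n+1) → Fin t → ℝ, isDesign n t ξ' →
      lambdaMin (NAgen n t ξ') ≤ lambdaMin (NAgen n t ξ)) :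
    repl n t ξ 0 = 1 / 2 ∧ ∀ i : Fin n, repl n t ξ i.succ = 1 / (2 * n) := by
  have : NeZero n := ⟨by omega⟩
  obtain ⟨ξ₀, hξ₀, hξ₀_bound⟩ := exists_isDesign_le_lambdaMin (n := n) (by omega) ht
  obtain ⟨h_sum, h_doses⟩ := sum_eq_half_and_eq_inv_two_mul_card
    (ρ := fun i : Fin n => repl n t ξ i.succ)
    (by simpa using hξ₀_bound.trans (hopt ξ₀ hξ₀))
    fun x => (lambdaMin_mul_sum_sq_le _ x).trans (quadForm_NAgen_le hξ x)
  refine ⟨by linarith [hξ.repl_zero_add_sum_repl_succ], fun i => by simpa using h_doses i⟩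
end
end

section
/- For every standard dose-escalation design ξ (t = n), λ_min(N_A(ξ)) ≤ 1/(4n), and λ_min(N_A(ξ)) = 1/(4n) holds if and only if ξ is the Senn design. Consequently, a standard design is E-optimal for comparing the drug doses with the placebo (i.e., maximizes λ_min(N_A(·)) among all standard dose-escalation designs) if and only if it is the Senn design. -/
noncomputable section

open Matrix Finset

/-- A dose-escalation design: (i) in cohort k ≤ n only treatments 0,…,k are
allowed (cohort `k : Fin t` has cohort number k+1, treatment `i : Fin (n+1)`
has treatment number i); (ii) each cohort has proportion 1/t. -/
def isEscalation (n t : ℕ) (ξ : Fin (n+1) → Fin t → ℝ) : Prop :=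
  isDesign n t ξ ∧
  (∀ (i : Fin (n+1)) (k : Fin t), k.val + 1 ≤ n → k.val + 1 < i.val → ξ i k = 0) ∧
  (∀ k : Fin t, ∑ i, ξ i k = 1 / t)

/-- The information matrix N_A(ξ) = diag(r_1,…,r_n) − t·Z Z^T for comparing
the doses with the placebo. -/
def NA (n t : ℕ) (ξ : Fin (n+1) → Fin t → ℝ) : Matrix (Fin n) (Fin n) ℝ :=
  fun i j => (if i = j then repl n t ξ i.succ else 0) -
    (t : ℝ) * ∑ k, ξ i.succ k * ξ j.succ k

/-- The Senn design (t = n): in each cohort half the weight on placebo and half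
on the highest allowed dose. -/
def senn (n : ℕ) : Fin (n+1) → Fin n → ℝ :=
  fun i k => if i.val = 0 ∨ i.val = k.val + 1 then 1 / (2 * n) else 0

/-! Test the Rayleigh quotient with the indicator of the doses `c+1, …, n`. For a
dose-escalation design its value is the average, over the cohorts `k ≥ c`, of `g - n g²`, where
`g` is the weight of cohort `k` on these doses; cohorts `k < c` contribute nothing since they
cannot contain them. As `g - n g² = 1/(4n) - n (g - 1/(2n))²`, this gives `λ_min ≤ 1/(4n)`, and
equality forces `g = 1/(2n)` for all `c ≤ k`. Differencing in `c`, together with the cohort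
totals `1/n`, then pins down the Senn design, whose information matrix is `(1/(4n)) • 1`. -/

lemma isDesign.cohorts_pos {n t : ℕ} {ξ : Fin (n+1) → Fin t → ℝ} (h : isDesign n t ξ) :
    0 < t := by
  rcases t with _ | t
  · simpa using h.2
  · exact t.succ_pos

lemma lambdaMin_le_div {m : ℕ} (A : Matrix (Fin m) (Fin m) ℝ) {x : Fin m → ℝ} (hx : x ≠ 0) :
    lambdaMin A ≤ (∑ i, ∑ j, x i * A i j * x j) / ∑ i, x i ^ 2 := by
  set s := ∑ i, x i ^ 2
  have hs : 0 < s := by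
    obtain ⟨i, hi⟩ := Function.ne_iff.mp hx
    exact sum_pos' (fun _ _ => sq_nonneg _) ⟨i, mem_univ i, pow_two_pos_of_ne_zero hi⟩
  have hsqrt : √s ^ 2 = s := Real.sq_sqrt hs.le
  have hsqrt0 : √s ≠ 0 := (Real.sqrt_pos.mpr hs).ne'
  convert lambdaMin_le A (x := fun i => x i / √s) ?_ using 1
  · rw [sum_div]
    refine sum_congr rfl fun i _ => ?_
    rw [sum_div]
    refine sum_congr rfl fun j _ => ?_
    field_simp
    rw [hsqrt]
  · simp_rw [div_pow, hsqrt, ← sum_div]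
    exact div_self hs.ne'

lemma lambdaMin_smul_one {m : ℕ} (hm : 0 < m) (c : ℝ) :
    lambdaMin (c • (1 : Matrix (Fin m) (Fin m) ℝ)) = c := by
  have hform : ∀ x : Fin m → ℝ, ∑ i, ∑ j, x i * (c • (1 : Matrix (Fin m) (Fin m) ℝ)) i j * x j
      = c * ∑ i, x i ^ 2 := fun x => by
    simp [Matrix.one_apply, mul_sum, sq, mul_comm, mul_left_comm]
  have hset : { r : ℝ | ∃ x : Fin m → ℝ, ∑ i, x i ^ 2 = 1 ∧
      r = ∑ i, ∑ j, x i * (c • (1 : Matrix (Fin m) (Fin m) ℝ)) i j * x j } = {c} := by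
    ext r
    simp only [Set.mem_ofPred_eq, Set.mem_singleton_iff, hform]
    constructor
    · rintro ⟨x, hx, rfl⟩
      rw [hx, mul_one]
    · rintro rfl
      exact ⟨Pi.single ⟨0, hm⟩ 1, by simp [sq, Pi.single_apply], by simp [sq, Pi.single_apply]⟩
  rw [lambdaMin, hset, csInf_singleton]

lemma quadForm_NA {n t : ℕ} (ξ : Fin (n+1) → Fin t → ℝ) (x : Fin n → ℝ) :
    ∑ i, ∑ j, x i * NA n t ξ i j * x j
      = ∑ i, x i ^ 2 * repl n t ξ i.succ - t * ∑ k, (∑ i, x i * ξ i.succ k) ^ 2 := by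
  simp only [NA, mul_sub, sub_mul, sum_sub_distrib, mul_ite, ite_mul, mul_zero, zero_mul,
    sum_ite_eq, mem_univ, if_true, sq, mul_sum, sum_mul]
  rw [sum_comm_cycle]
  congr 1 <;> simp only [mul_comm, mul_left_comm, mul_assoc]

lemma quadForm_NA_indicator {n t : ℕ} (ξ : Fin (n+1) → Fin t → ℝ) (S : Finset (Fin n)) :
    ∑ i, ∑ j, (if i ∈ S then 1 else 0) * NA n t ξ i j * (if j ∈ S then 1 else 0)
      = ∑ k, (∑ i ∈ S, ξ i.succ k - t * (∑ i ∈ S, ξ i.succ k) ^ 2) := by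
  rw [quadForm_NA, sum_sub_distrib, ← mul_sum]
  simp only [ite_pow, one_pow, ite_mul, one_mul, ne_eq, OfNat.ofNat_ne_zero, not_false_eq_true,
    zero_pow, zero_mul, sum_ite_mem, univ_inter, repl]
  rw [sum_comm]

lemma isEscalation.apply_succ_eq_zero {n : ℕ} {ξ : Fin (n+1) → Fin n → ℝ}
    (hξ : isEscalation n n ξ) {i k : Fin n} (hki : k < i) : ξ i.succ k = 0 :=
  hξ.2.1 i.succ k k.isLt (by rw [Fin.val_succ]; exact Nat.succ_lt_succ hki)

def tailMass {n t : ℕ} (ξ : Fin (n+1) → Fin t → ℝ) (c : Fin n) (k : Fin t) : ℝ :=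
  ∑ i ∈ Ici c, ξ i.succ k

lemma tailMass_eq_add {n t : ℕ} (ξ : Fin (n+1) → Fin t → ℝ) (c : Fin n) (k : Fin t) :
    tailMass ξ c k = ξ c.succ k + ∑ i ∈ Ioi c, ξ i.succ k := by
  rw [tailMass, Ici_eq_cons_Ioi, sum_cons]

lemma isEscalation.tailMass_eq_zero {n : ℕ} {ξ : Fin (n+1) → Fin n → ℝ}
    (hξ : isEscalation n n ξ) {c k : Fin n} (hkc : k < c) : tailMass ξ c k = 0 :=
  sum_eq_zero fun _ hi => hξ.apply_succ_eq_zero (hkc.trans_le (mem_Ici.mp hi))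

lemma lambdaMin_NA_le_sub_tailMass {n : ℕ} {ξ : Fin (n+1) → Fin n → ℝ}
    (hξ : isEscalation n n ξ) (c : Fin n) :
    lambdaMin (NA n n ξ) ≤ 1 / (4 * n) -
      n / #(Ici c) * ∑ k ∈ Ici c, (tailMass ξ c k - 1 / (2 * n)) ^ 2 := by
  have hn : (n : ℝ) ≠ 0 := Nat.cast_ne_zero.mpr (Fin.pos c).ne'
  have hcard : (#(Ici c) : ℝ) ≠ 0 := Nat.cast_ne_zero.mpr (card_ne_zero.mpr ⟨c, by simp⟩)
  have hx : (fun i => if i ∈ Ici c then (1 : ℝ) else 0) ≠ 0 :=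
    fun h => by simpa using congrFun h c
  have h := lambdaMin_le_div (NA n n ξ) hx
  have hsq : ∑ i, (if i ∈ Ici c then (1 : ℝ) else 0) ^ 2 = #(Ici c) := by
    simp only [ite_pow, one_pow, ne_eq, OfNat.ofNat_ne_zero, not_false_eq_true, zero_pow,
      sum_ite_mem, univ_inter, sum_const, nsmul_one]
  rw [quadForm_NA_indicator, hsq] at h
  have hsupp : ∑ k, (tailMass ξ c k - n * tailMass ξ c k ^ 2)
      = ∑ k ∈ Ici c, (tailMass ξ c k - n * tailMass ξ c k ^ 2) :=
    (sum_subset (subset_univ _) fun k _ hk => by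
      rw [hξ.tailMass_eq_zero (by simpa using hk)]; ring).symm
  have hsquare : ∀ g : ℝ, g - n * g ^ 2 = 1 / (4 * n) - n * (g - 1 / (2 * n)) ^ 2 :=
    fun g => by field_simp; ring
  refine h.trans_eq ?_
  change (∑ k, (tailMass ξ c k - n * tailMass ξ c k ^ 2)) / _ = _
  rw [hsupp, sum_congr rfl fun k _ => hsquare (tailMass ξ c k), sum_sub_distrib, sum_const,
    nsmul_eq_mul, ← mul_sum]
  generalize ∑ k ∈ Ici c, (tailMass ξ c k - 1 / (2 * n)) ^ 2 = s
  field_simp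

lemma lambdaMin_NA_le {n : ℕ} {ξ : Fin (n+1) → Fin n → ℝ} (hξ : isEscalation n n ξ) :
    lambdaMin (NA n n ξ) ≤ 1 / (4 * n) :=
  (lambdaMin_NA_le_sub_tailMass hξ ⟨0, hξ.1.cohorts_pos⟩).trans (sub_le_self _ (by positivity))

lemma isEscalation.tailMass_eq_of_lambdaMin_NA_eq {n : ℕ} {ξ : Fin (n+1) → Fin n → ℝ}
    (hξ : isEscalation n n ξ) (h : lambdaMin (NA n n ξ) = 1 / (4 * n)) {c k : Fin n}
    (hck : c ≤ k) : tailMass ξ c k = 1 / (2 * n) := by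
  have hle := lambdaMin_NA_le_sub_tailMass hξ c
  rw [h] at hle
  have hcoef : 0 < (n : ℝ) / #(Ici c) := by
    have : 0 < #(Ici c) := card_pos.mpr ⟨c, mem_Ici.mpr le_rfl⟩
    exact div_pos (Nat.cast_pos.mpr (Fin.pos c)) (Nat.cast_pos.mpr this)
  have hsum : ∑ k ∈ Ici c, (tailMass ξ c k - 1 / (2 * n)) ^ 2 = 0 := by
    refine le_antisymm ?_ (sum_nonneg fun _ _ => sq_nonneg _)
    by_contra! hpos
    linarith [mul_pos hcoef hpos]
  have hk := (sum_eq_zero_iff_of_nonneg fun _ _ => sq_nonneg _).mp hsum k (mem_Ici.mpr hck)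
  exact sub_eq_zero.mp (pow_eq_zero_iff two_ne_zero |>.mp hk)

lemma senn_zero (n : ℕ) (k : Fin n) : senn n 0 k = 1 / (2 * n) :=
  if_pos (Or.inl rfl)

lemma senn_succ (n : ℕ) (d k : Fin n) :
    senn n d.succ k = if d = k then (1 / (2 * n) : ℝ) else 0 := by
  simp [senn, Fin.ext_iff]

lemma isEscalation.eq_senn_of_tailMass {n : ℕ} {ξ : Fin (n+1) → Fin n → ℝ}
    (hξ : isEscalation n n ξ) (h : ∀ c k : Fin n, c ≤ k → tailMass ξ c k = 1 / (2 * n)) :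
    ξ = senn n := by
  funext i k
  cases i using Fin.cases with
  | zero =>
    have hcol := hξ.2.2 k
    have htail := h ⟨0, k.pos⟩ k (Fin.le_def.mpr k.val.zero_le)
    have hIci : Ici (⟨0, k.pos⟩ : Fin n) = univ :=
      eq_univ_of_forall fun i => mem_Ici.mpr (Fin.le_def.mpr i.val.zero_le)
    have hhalf : (1 / n : ℝ) = 1 / (2 * n) + 1 / (2 * n) := by ring
    rw [Fin.sum_univ_succ, ← hIci] at hcol
    rw [senn_zero]
    change ξ 0 k + tailMass ξ _ k = _ at hcol
    linarith
  | succ d =>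
    rw [senn_succ]
    rcases lt_trichotomy d k with hdk | rfl | hkd
    · let d' : Fin n := ⟨d + 1, by omega⟩
      have hIoi : Ioi d = Ici d' := by
        ext; simp only [mem_Ioi, mem_Ici, Fin.lt_def, Fin.le_def, d']; omega
      have hd := h d k hdk.le
      rw [tailMass_eq_add, hIoi, ← tailMass, h d' k (Fin.le_def.mpr hdk)] at hd
      rw [if_neg hdk.ne]
      linarith
    · rw [if_pos rfl, ← h d d le_rfl, tailMass_eq_add, sum_eq_zero fun i hi =>
        hξ.apply_succ_eq_zero (mem_Ioi.mp hi), add_zero]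
    · rw [if_neg hkd.ne', hξ.apply_succ_eq_zero hkd]

lemma senn_isEscalation {n : ℕ} (hn : 0 < n) : isEscalation n n (senn n) := by
  have hcol : ∀ k, ∑ i, senn n i k = 1 / n := fun k => by
    simp only [Fin.sum_univ_succ, senn_zero, senn_succ, sum_ite_eq', mem_univ, if_true]
    ring
  refine ⟨⟨fun i k => ?_, ?_⟩, fun i k _ hik => if_neg (by omega), hcol⟩
  · unfold senn; split <;> positivity
  · rw [sum_comm, sum_congr rfl fun k _ => hcol k, sum_const, card_univ, Fintype.card_fin,
      nsmul_eq_mul]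
    field_simp

lemma NA_senn {n : ℕ} (hn : 0 < n) : NA n n (senn n) = (1 / (4 * n) : ℝ) • 1 := by
  have hn' : (n : ℝ) ≠ 0 := Nat.cast_ne_zero.mpr hn.ne'
  ext d e
  simp only [NA, repl, senn_succ, ite_mul, mul_ite, zero_mul, mul_zero, sum_ite_eq,
    mem_univ, if_true, Matrix.smul_apply, Matrix.one_apply, smul_eq_mul]
  split_ifs <;> field_simp <;> ring

lemma lambdaMin_NA_senn {n : ℕ} (hn : 0 < n) : lambdaMin (NA n n (senn n)) = 1 / (4 * n) := by
  rw [NA_senn hn, lambdaMin_smul_one hn]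

theorem stmt2_general (n : ℕ) :
    (∀ ξ : Fin (n+1) → Fin n → ℝ, isEscalation n n ξ →
      lambdaMin (NA n n ξ) ≤ 1 / (4 * n) ∧
      (lambdaMin (NA n n ξ) = 1 / (4 * n) ↔ ξ = senn n)) ∧
    (∀ ξ : Fin (n+1) → Fin n → ℝ, isEscalation n n ξ →
      ((∀ ξ' : Fin (n+1) → Fin n → ℝ, isEscalation n n ξ' →
          lambdaMin (NA n n ξ') ≤ lambdaMin (NA n n ξ)) ↔ ξ = senn n)) := by
  have hattain : ∀ ξ, isEscalation n n ξ → (lambdaMin (NA n n ξ) = 1 / (4 * n) ↔ ξ = senn n) :=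
    fun ξ hξ => ⟨fun h => hξ.eq_senn_of_tailMass fun _ _ => hξ.tailMass_eq_of_lambdaMin_NA_eq h,
      by rintro rfl; exact lambdaMin_NA_senn hξ.1.cohorts_pos⟩
  refine ⟨fun ξ hξ => ⟨lambdaMin_NA_le hξ, hattain ξ hξ⟩, fun ξ hξ => ?_⟩
  have hsenn := senn_isEscalation hξ.1.cohorts_pos
  rw [← hattain ξ hξ]
  constructor
  · intro hopt
    exact le_antisymm (lambdaMin_NA_le hξ) (lambdaMin_NA_senn hξ.1.cohorts_pos ▸ hopt _ hsenn)
  · intro h ξ' hξ'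
    exact h ▸ lambdaMin_NA_le hξ'

/-- Theorem 1 (E-optimality, standard designs): every standard dose-escalation
design has λ_min(N_A(ξ)) ≤ 1/(4n), with equality iff ξ is the Senn design;
consequently, a standard design is E-optimal iff it is the Senn design. -/
theorem stmt2 (n : ℕ) (hn : 2 ≤ n) :
    (∀ ξ : Fin (n+1) → Fin n → ℝ, isEscalation n n ξ →
      lambdaMin (NA n n ξ) ≤ 1 / (4 * n) ∧
      (lambdaMin (NA n n ξ) = 1 / (4 * n) ↔ ξ = senn n)) ∧
    (∀ ξ : Fin (n+1) → Fin n → ℝ, isEscalation n n ξ →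
      ((∀ ξ' : Fin (n+1) → Fin n → ℝ, isEscalation n n ξ' →
          lambdaMin (NA n n ξ') ≤ lambdaMin (NA n n ξ)) ↔ ξ = senn n)) :=
  stmt2_general n
end
end

section
/- Let ξ be an extended dose-escalation design (t = n+1) with ξ(0,k) = 1/(2(n+1)) for every cohort k = 1,…,n+1 and r_1(ξ) = … = r_n(ξ) = 1/(2n). Then the all-ones vector 1_n is an eigenvector of N_A(ξ) with eigenvalue 1/(4n), i.e., N_A(ξ)·1_n = (1/(4n))·1_n. -/
/-! Every cohort gives the doses total weight 1/t − ξ(0,k) = 1/(2t), so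
(N_A 1)_i = r_i − t · r_i/(2t) = r_i/2 = 1/(4n). -/

noncomputable section

open Matrix Finset

lemma NA_mulVec_one_apply (n t : ℕ) (ξ : Fin (n+1) → Fin t → ℝ) (i : Fin n) :
    (NA n t ξ *ᵥ fun _ => 1) i
      = repl n t ξ i.succ - t * ∑ k, ξ i.succ k * ∑ j : Fin n, ξ j.succ k := by
  simp only [mulVec, dotProduct, mul_one, NA, sum_sub_distrib, sum_ite_eq, mem_univ, if_true,
    mul_sum]
  rw [sum_comm]

lemma NA_mulVec_one_of_sum_doses_eq {n t : ℕ} {ξ : Fin (n+1) → Fin t → ℝ} {c : ℝ}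
    (hc : ∀ k, ∑ j : Fin n, ξ j.succ k = c) :
    NA n t ξ *ᵥ (fun _ => 1) = fun i => (1 - t * c) * repl n t ξ i.succ := by
  funext i
  simp only [NA_mulVec_one_apply, hc, ← sum_mul, repl]
  ring

lemma isEscalation.sum_doses {n t : ℕ} {ξ : Fin (n+1) → Fin t → ℝ} (hξ : isEscalation n t ξ)
    (k : Fin t) : ∑ j : Fin n, ξ j.succ k = 1 / t - ξ 0 k := by
  have hk := hξ.2.2 k
  rw [Fin.sum_univ_succ] at hk
  linarith

theorem stmt6_general (n : ℕ) (ξ : Fin (n+1) → Fin (n+1) → ℝ)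
    (hξ : isEscalation n (n+1) ξ)
    (h0 : ∀ k : Fin (n+1), ξ 0 k = 1 / (2 * (n + 1)))
    (hr : ∀ i : Fin n, repl n (n+1) ξ i.succ = 1 / (2 * n)) :
    (NA n (n+1) ξ).mulVec (fun _ => 1) = fun _ => 1 / (4 * (n : ℝ)) := by
  have hdoses : ∀ k, ∑ j : Fin n, ξ j.succ k = 1 / (2 * (n + 1)) := fun k => by
    rw [hξ.sum_doses, h0]
    push_cast
    field_simp
    ring
  rw [NA_mulVec_one_of_sum_doses_eq hdoses]
  funext i
  rw [hr i]
  push_cast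
  field_simp
  ring

/-- For an extended design (t = n+1) with ξ(0,k) = 1/(2(n+1)) for all cohorts
and r_1 = … = r_n = 1/(2n), the all-ones vector is an eigenvector of N_A(ξ)
with eigenvalue 1/(4n). -/
theorem stmt6 (n : ℕ) (hn : 2 ≤ n) (ξ : Fin (n+1) → Fin (n+1) → ℝ)
    (hξ : isEscalation n (n+1) ξ)
    (h0 : ∀ k : Fin (n+1), ξ 0 k = 1 / (2 * (n + 1)))
    (hr : ∀ i : Fin n, repl n (n+1) ξ i.succ = 1 / (2 * n)) :
    (NA n (n+1) ξ).mulVec (fun _ => 1) = fun _ => 1 / (4 * (n : ℝ)) :=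
  stmt6_general n ξ hξ h0 hr
end
end

section
/- For every extended dose-escalation design ξ (t = n+1) with N_A(ξ) invertible, 1_n^T N_A(ξ)^{-1} 1_n ≥ 4n², and every E-optimal extended design attains equality: if ξ satisfies ξ(0,k) = 1/(2(n+1)) for all k = 1,…,n+1 and r_1(ξ) = … = r_n(ξ) = 1/(2n), then 1_n^T N_A(ξ)^{-1} 1_n = 4n². Consequently, every E-optimal extended design minimizes the variance of the least-squares estimator of the average dose effect compared with the placebo, (1/n)∑_{i=1}^n τ_i − τ_0, which is proportional to (1/n²)·1_n^T N_A(ξ)^{-1} 1_n. -/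
/-! Write `A = N_A(ξ)`. In every cohort `k` the quadratic form of `A` is a weighted variance: with
weights `ξ(·, k)` of total mass `1/t`, the form is `∑ᵢ ξ(i,k) (yᵢ - mₖ)²` for `y = (0, x)` and
`mₖ` the cohort mean, so `A` is positive semidefinite. Cauchy–Schwarz for `⟨x, y⟩ = x ⬝ A y`,
applied to `1` and `A⁻¹ 1`, gives `n² = (1 ⬝ 1)² ≤ (1 ⬝ A 1)(1 ⬝ A⁻¹ 1)`, and
`1 ⬝ A 1 = S - t ∑ₖ sₖ² ≤ S - S² ≤ 1/4`, where `sₖ` is the dose weight of cohort `k` and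
`S = ∑ₖ sₖ`. For an E-optimal design every row of `A` sums to `rᵢ / 2 = 1/(4n)`, so
`A⁻¹ 1 = 4n · 1`; here `A` is invertible because the positive placebo weights force a vector in
the kernel to vanish. -/

noncomputable section

open Matrix Finset

theorem Matrix.PosSemidef.sq_dotProduct_self_le {ι : Type*} [Fintype ι] [DecidableEq ι]
    {A : Matrix ι ι ℝ} (hA : A.PosSemidef) (hdet : IsUnit A.det) (v : ι → ℝ) :
    (v ⬝ᵥ v) ^ 2 ≤ (v ⬝ᵥ A *ᵥ v) * (v ⬝ᵥ A⁻¹ *ᵥ v) := by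
  set u := A⁻¹ *ᵥ v
  have hAu : A *ᵥ u = v := by rw [mulVec_mulVec, mul_nonsing_inv _ hdet, one_mulVec]
  have hAT : Aᵀ = A := by rw [← conjTranspose_eq_transpose_of_trivial, hA.isHermitian.eq]
  have huA : ∀ w, u ⬝ᵥ A *ᵥ w = v ⬝ᵥ w := fun w => by
    rw [dotProduct_mulVec, ← hAT, vecMul_transpose, hAu]
  -- Cauchy–Schwarz for the semi-inner product `x ⬝ᵥ A *ᵥ y`, via the discriminant
  have hdisc := discrim_le_zero (a := v ⬝ᵥ u) (b := -2 * (v ⬝ᵥ v)) (c := v ⬝ᵥ A *ᵥ v)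
    fun l => by
      have h := hA.dotProduct_mulVec_nonneg (v - l • u)
      simp only [star_trivial, mulVec_sub, mulVec_smul, hAu, dotProduct_sub, sub_dotProduct,
        dotProduct_smul, smul_dotProduct, huA, smul_eq_mul, dotProduct_comm u v] at h
      linarith
  rw [discrim] at hdisc
  linarith

theorem Matrix.sum_sum_apply_eq_one_dotProduct_mulVec_one {ι : Type*} [Fintype ι]
    (A : Matrix ι ι ℝ) : ∑ i, ∑ j, A i j = 1 ⬝ᵥ A *ᵥ 1 := by
  simp [dotProduct, mulVec]

theorem sum_mul_sub_sq_eq {ι : Type*} [Fintype ι] (w y : ι → ℝ) {c : ℝ}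
    (hc : c * ∑ i, w i = 1) :
    ∑ i, w i * (y i - c * ∑ j, w j * y j) ^ 2
      = ∑ i, w i * y i ^ 2 - c * (∑ i, w i * y i) ^ 2 := by
  set m := ∑ j, w j * y j
  have hexpand : ∀ i, w i * (y i - c * m) ^ 2
      = w i * y i ^ 2 - 2 * c * m * (w i * y i) + (c * m) ^ 2 * w i := fun i => by ring
  rw [sum_congr rfl fun i _ => hexpand i, sum_add_distrib, sum_sub_distrib, ← mul_sum,
    ← mul_sum]
  linear_combination c * m ^ 2 * hc

section NA

variable {n t : ℕ} (ξ : Fin (n+1) → Fin t → ℝ)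

theorem NA_isHermitian : (NA n t ξ).IsHermitian := by
  ext i j
  simp only [conjTranspose_apply, star_trivial, NA, eq_comm (a := j), mul_comm (ξ j.succ _)]
  split_ifs with h
  · rw [h]
  · rfl

theorem dotProduct_NA_mulVec (x : Fin n → ℝ) :
    x ⬝ᵥ NA n t ξ *ᵥ x
      = ∑ i, repl n t ξ i.succ * x i ^ 2 - t * ∑ k, (∑ i, ξ i.succ k * x i) ^ 2 := by
  simp only [dotProduct, mulVec, NA, sub_mul, mul_sub, sum_sub_distrib, ite_mul, zero_mul,
    sum_ite_eq, mem_univ, if_true, sq, sum_mul, mul_sum]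
  congr 1
  · refine sum_congr rfl fun i _ => ?_
    ring
  · conv_rhs => rw [sum_comm]; enter [2, i]; rw [sum_comm]
    refine sum_congr rfl fun i _ => sum_congr rfl fun j _ => sum_congr rfl fun k _ => ?_
    ring

variable {ξ}

theorem dotProduct_NA_mulVec_eq_sum_variance (hσ : ∀ k, ∑ i, ξ i k = 1 / t)
    (x : Fin n → ℝ) :
    x ⬝ᵥ NA n t ξ *ᵥ x = ∑ k, ∑ i, ξ i k *
      ((Fin.cons 0 x : Fin (n+1) → ℝ) i
        - t * ∑ j, ξ j k * (Fin.cons 0 x : Fin (n+1) → ℝ) j) ^ 2 := by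
  have hvar : ∀ k, ∑ i, ξ i k *
      ((Fin.cons 0 x : Fin (n+1) → ℝ) i
        - t * ∑ j, ξ j k * (Fin.cons 0 x : Fin (n+1) → ℝ) j) ^ 2
      = ∑ i, ξ i.succ k * x i ^ 2 - t * (∑ i, ξ i.succ k * x i) ^ 2 := fun k => by
    have ht : (t : ℝ) ≠ 0 := Nat.cast_ne_zero.mpr k.pos.ne'
    rw [sum_mul_sub_sq_eq _ _ (by rw [hσ k]; field_simp)]
    simp [Fin.sum_univ_succ]
  rw [dotProduct_NA_mulVec, sum_congr rfl fun k _ => hvar k, sum_sub_distrib, ← mul_sum, sum_comm]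
  simp only [repl, sum_mul]

theorem NA_posSemidef (hnn : ∀ i k, 0 ≤ ξ i k) (hσ : ∀ k, ∑ i, ξ i k = 1 / t) :
    (NA n t ξ).PosSemidef := by
  refine .of_dotProduct_mulVec_nonneg (NA_isHermitian ξ) fun x => ?_
  rw [star_trivial, dotProduct_NA_mulVec_eq_sum_variance hσ]
  exact sum_nonneg fun k _ => sum_nonneg fun i _ => mul_nonneg (hnn i k) (sq_nonneg _)

theorem NA_posDef (hnn : ∀ i k, 0 ≤ ξ i k) (hσ : ∀ k, ∑ i, ξ i k = 1 / t)
    (hplacebo : ∀ k, 0 < ξ 0 k) (hdose : ∀ i : Fin n, ∃ k, 0 < ξ i.succ k) :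
    (NA n t ξ).PosDef := by
  refine .of_dotProduct_mulVec_pos (NA_isHermitian ξ) fun x hx => ?_
  rw [star_trivial]
  refine lt_of_le_of_ne (by simpa using (NA_posSemidef hnn hσ).dotProduct_mulVec_nonneg x)
    fun hzero => hx ?_
  set y : Fin (n+1) → ℝ := Fin.cons 0 x
  set m : Fin t → ℝ := fun k => t * ∑ j, ξ j k * y j
  rw [dotProduct_NA_mulVec_eq_sum_variance hσ] at hzero
  have hterm_nonneg : ∀ k i, 0 ≤ ξ i k * (y i - m k) ^ 2 := fun k i =>
    mul_nonneg (hnn i k) (sq_nonneg _)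
  have hterm : ∀ k i, ξ i k * (y i - m k) ^ 2 = 0 := fun k i =>
    (sum_eq_zero_iff_of_nonneg fun i _ => hterm_nonneg k i).mp
      ((sum_eq_zero_iff_of_nonneg fun k _ => sum_nonneg fun i _ => hterm_nonneg k i).mp
        hzero.symm k (mem_univ k)) i (mem_univ i)
  -- the placebo forces every cohort mean to vanish, then each dose meets one of them
  have hmean : ∀ k, m k = 0 := fun k => by
    simpa [y, (hplacebo k).ne'] using hterm k 0
  funext i
  obtain ⟨k, hk⟩ := hdose i
  simpa [y, hmean k, hk.ne'] using hterm k i.succ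

theorem one_dotProduct_NA_mulVec_one_le :
    (1 : Fin n → ℝ) ⬝ᵥ NA n t ξ *ᵥ 1 ≤ 1 / 4 := by
  set s : Fin t → ℝ := fun k => ∑ i : Fin n, ξ i.succ k
  have hcs : (∑ k, s k) ^ 2 ≤ t * ∑ k, s k ^ 2 := by
    simpa using sq_sum_le_card_mul_sum_sq (s := univ) (f := s)
  have hform : (1 : Fin n → ℝ) ⬝ᵥ NA n t ξ *ᵥ 1 = ∑ k, s k - t * ∑ k, s k ^ 2 := by
    simp only [dotProduct_NA_mulVec, Pi.one_apply, one_pow, mul_one, repl, s]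
    rw [sum_comm]
  rw [hform]
  nlinarith [sq_nonneg (∑ k, s k - 1 / 2)]

theorem sum_NA_apply_eq_half_repl (hσ : ∀ k, ∑ i, ξ i k = 1 / t)
    (hplacebo : ∀ k, ξ 0 k = 1 / (2 * t)) (i : Fin n) :
    ∑ j, NA n t ξ i j = repl n t ξ i.succ / 2 := by
  have hdoses : ∀ k, t * ∑ j : Fin n, ξ j.succ k = 1 / 2 := fun k => by
    have ht : (t : ℝ) ≠ 0 := Nat.cast_ne_zero.mpr k.pos.ne'
    have h := hσ k
    rw [Fin.sum_univ_succ, hplacebo k] at h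
    field_simp at h ⊢
    linarith
  simp only [NA, sum_sub_distrib, sum_ite_eq, mem_univ, if_true, ← mul_sum, repl]
  rw [sum_comm]
  simp only [← mul_sum]
  rw [mul_sum, sum_div, ← sum_sub_distrib]
  refine sum_congr rfl fun k _ => ?_
  rw [mul_left_comm, hdoses k]
  ring

end NA

theorem four_mul_sq_le_sum_inv_NA {n t : ℕ} {ξ : Fin (n+1) → Fin t → ℝ}
    (hnn : ∀ i k, 0 ≤ ξ i k) (hσ : ∀ k, ∑ i, ξ i k = 1 / t)
    (hdet : IsUnit (NA n t ξ).det) :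
    4 * (n : ℝ) ^ 2 ≤ ∑ i, ∑ j, (NA n t ξ)⁻¹ i j := by
  have hA := NA_posSemidef hnn hσ
  have hCS := hA.sq_dotProduct_self_le hdet 1
  have ha := hA.dotProduct_mulVec_nonneg 1
  have hc := hA.inv.dotProduct_mulVec_nonneg 1
  simp only [star_trivial, dotProduct_one, sum_const, card_univ, Fintype.card_fin,
    Pi.one_apply, nsmul_eq_mul, mul_one] at hCS ha hc
  rw [sum_sum_apply_eq_one_dotProduct_mulVec_one]
  nlinarith [one_dotProduct_NA_mulVec_one_le (ξ := ξ)]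

theorem sum_inv_NA_eq {n t : ℕ} {ξ : Fin (n+1) → Fin t → ℝ}
    (hnn : ∀ i k, 0 ≤ ξ i k) (hσ : ∀ k, ∑ i, ξ i k = 1 / t)
    (hplacebo : ∀ k, ξ 0 k = 1 / (2 * t))
    (hrepl : ∀ i : Fin n, repl n t ξ i.succ = 1 / (2 * n)) :
    ∑ i, ∑ j, (NA n t ξ)⁻¹ i j = 4 * (n : ℝ) ^ 2 := by
  have hdose : ∀ i : Fin n, ∃ k, 0 < ξ i.succ k := fun i => by
    have hn : (0 : ℝ) < n := Nat.cast_pos.mpr i.pos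
    have hpos : ∑ _k : Fin t, (0 : ℝ) < ∑ k, ξ i.succ k := by
      rw [sum_const_zero, ← repl, hrepl i]; positivity
    simpa using exists_lt_of_sum_lt hpos
  have hpd := NA_posDef hnn hσ (fun k => by rw [hplacebo k]; have := k.pos; positivity) hdose
  have hdet : IsUnit (NA n t ξ).det := isUnit_iff_ne_zero.mpr hpd.det_pos.ne'
  have hmul : NA n t ξ *ᵥ (fun _ => 4 * (n : ℝ)) = 1 := funext fun i => by
    have hn : (n : ℝ) ≠ 0 := Nat.cast_ne_zero.mpr i.pos.ne'
    simp only [mulVec, dotProduct, ← sum_mul, sum_NA_apply_eq_half_repl hσ hplacebo, hrepl,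
      Pi.one_apply]
    field_simp
    norm_num
  have hinv : (NA n t ξ)⁻¹ *ᵥ 1 = fun _ => 4 * (n : ℝ) := by
    rw [← hmul, mulVec_mulVec, nonsing_inv_mul _ hdet, one_mulVec]
  rw [sum_sum_apply_eq_one_dotProduct_mulVec_one, hinv]
  simp only [one_dotProduct, sum_const, card_univ, Fintype.card_fin, nsmul_eq_mul]
  ring

theorem stmt9_general (n : ℕ) :
    (∀ ξ : Fin (n+1) → Fin (n+1) → ℝ, isEscalation n (n+1) ξ →
      IsUnit (NA n (n+1) ξ).det →
      4 * (n : ℝ) ^ 2 ≤ ∑ i, ∑ j, (NA n (n+1) ξ)⁻¹ i j) ∧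
    (∀ ξ : Fin (n+1) → Fin (n+1) → ℝ, isEscalation n (n+1) ξ →
      (∀ k : Fin (n+1), ξ 0 k = 1 / (2 * (n + 1))) →
      (∀ i : Fin n, repl n (n+1) ξ i.succ = 1 / (2 * n)) →
      ∑ i, ∑ j, (NA n (n+1) ξ)⁻¹ i j = 4 * (n : ℝ) ^ 2) :=
  ⟨fun _ hξ hdet => four_mul_sq_le_sum_inv_NA hξ.1.1 hξ.2.2 hdet,
    fun _ hξ hplacebo hrepl =>
      sum_inv_NA_eq hξ.1.1 hξ.2.2 (fun k => by push_cast; exact hplacebo k) hrepl⟩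

/-- For every extended dose-escalation design (t = n+1) with invertible N_A,
the sum of all entries of N_A(ξ)⁻¹ is at least 4n², and every E-optimal
extended design (ξ(0,k) = 1/(2(n+1)) for all k and r_1 = … = r_n = 1/(2n))
attains equality; hence every E-optimal extended design minimizes the
variance of the least-squares estimator of (1/n)∑ᵢ τᵢ − τ₀, proportional to
(1/n²)·1ₙ^T N_A(ξ)⁻¹ 1ₙ. -/
theorem stmt9 (n : ℕ) (hn : 2 ≤ n) :
    (∀ ξ : Fin (n+1) → Fin (n+1) → ℝ, isEscalation n (n+1) ξ →
      IsUnit (NA n (n+1) ξ).det →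
      4 * (n : ℝ) ^ 2 ≤ ∑ i, ∑ j, (NA n (n+1) ξ)⁻¹ i j) ∧
    (∀ ξ : Fin (n+1) → Fin (n+1) → ℝ, isEscalation n (n+1) ξ →
      (∀ k : Fin (n+1), ξ 0 k = 1 / (2 * (n + 1))) →
      (∀ i : Fin n, repl n (n+1) ξ i.succ = 1 / (2 * n)) →
      ∑ i, ∑ j, (NA n (n+1) ξ)⁻¹ i j = 4 * (n : ℝ) ^ 2) :=
  stmt9_general n
end
end

section
/- Let c_n ∈ ℝ^{n+t+2} (t = n) be the vector with −1 in the coordinate of τ_0, +1 in the coordinate of τ_n, and 0 elsewhere. For every standard dose-escalation design ξ and every vector u with M(ξ)u = c_n, one has c_n^T u ≥ 4n. Moreover, for the Senn design ξ_S there exists u with M(ξ_S)u = c_n and c_n^T u = 4n. Hence the Senn design is c-optimal for estimating τ_n − τ_0 among standard dose-escalation designs. -/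
/-!
If `M` is positive semidefinite and `M u = c`, expanding `0 ≤ (u - w)ᵀ M (u - w)` gives
`cᵀ u ≥ 2 cᵀ w - wᵀ M w` for every `w`. Take for `w` the solution of `M(ξ_S) w = cₙ` for the
Senn design: `cₙᵀ w = 4n`, and `wᵀ M(ξ) w = 4n` for every standard dose-escalation design `ξ`,
because `f(i,k)ᵀ w` vanishes for every treatment allowed in cohorts `1, …, n-1` and is `±2n` in
cohort `n`, which carries weight `1/n`. Hence `cₙᵀ u ≥ 8n - 4n = 4n`.
-/

noncomputable section

open Matrix Finset

/-- Index of the parameter vector β = (τ₀,…,τₙ, μ, θ₁,…,θ_t) ∈ ℝ^{n+t+2}. -/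
abbrev PIdx (n t : ℕ) := Fin (n+1) ⊕ (Unit ⊕ Fin t)

/-- The regression vector f(i,k) = (e_{i+1}^T, 1, e_k^T)^T. -/
def fvec (n t : ℕ) (i : Fin (n+1)) (k : Fin t) : PIdx n t → ℝ :=
  fun j => match j with
  | Sum.inl a => if a = i then 1 else 0
  | Sum.inr (Sum.inl _) => 1
  | Sum.inr (Sum.inr b) => if b = k then 1 else 0

/-- The moment matrix M(ξ) = ∑_{i,k} ξ(i,k) f(i,k) f(i,k)^T. -/
def momM (n t : ℕ) (ξ : Fin (n+1) → Fin t → ℝ) : Matrix (PIdx n t) (PIdx n t) ℝ :=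
  ∑ i, ∑ k, ξ i k • Matrix.vecMulVec (fvec n t i k) (fvec n t i k)

/-- The stage-k moment matrix M^{(k)}(ξ): only trials in the first k cohorts
(cohorts with cohort number ≤ k) are kept. -/
def momMstage (n t : ℕ) (ξ : Fin (n+1) → Fin t → ℝ) (k : ℕ) :
    Matrix (PIdx n t) (PIdx n t) ℝ :=
  ∑ i, ∑ j ∈ Finset.univ.filter (fun j : Fin t => j.val < k),
    ξ i j • Matrix.vecMulVec (fvec n t i j) (fvec n t i j)

/-- The vector c_k, with −1 in the coordinate of τ₀, +1 in the coordinate of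
τ_k, and 0 elsewhere (so c_k^T β = τ_k − τ₀). -/
def cvec (n t k : ℕ) : PIdx n t → ℝ :=
  fun j => match j with
  | Sum.inl a => if a.val = 0 then -1 else if a.val = k then 1 else 0
  | Sum.inr _ => 0

namespace Matrix

theorem PosSemidef.two_mul_dotProduct_sub_le {ι : Type*} [Fintype ι] {M : Matrix ι ι ℝ}
    (hM : M.PosSemidef) {u c : ι → ℝ} (hu : M *ᵥ u = c) (w : ι → ℝ) :
    2 * (c ⬝ᵥ w) - w ⬝ᵥ M *ᵥ w ≤ c ⬝ᵥ u := by
  have hsymm : M.IsSymm := by simpa using hM.1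
  have huw : u ⬝ᵥ M *ᵥ w = c ⬝ᵥ w := by
    rw [dotProduct_mulVec, ← mulVec_transpose, hsymm.eq, hu]
  have hnonneg := hM.dotProduct_mulVec_nonneg (u - w)
  simp only [star_trivial, mulVec_sub, dotProduct_sub, sub_dotProduct, huw, hu] at hnonneg
  linarith [dotProduct_comm u c, dotProduct_comm w c]

end Matrix

section MomentMatrix

variable {n t : ℕ}

theorem momM_posSemidef {ξ : Fin (n+1) → Fin t → ℝ} (hξ : ∀ i k, 0 ≤ ξ i k) :
    (momM n t ξ).PosSemidef :=
  posSemidef_sum _ fun i _ => posSemidef_sum _ fun k _ =>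
    PosSemidef.smul (by simpa using posSemidef_vecMulVec_self_star (fvec n t i k)) (hξ i k)

theorem momM_mulVec (ξ : Fin (n+1) → Fin t → ℝ) (u : PIdx n t → ℝ) :
    momM n t ξ *ᵥ u = ∑ i, ∑ k, (ξ i k * (fvec n t i k ⬝ᵥ u)) • fvec n t i k := by
  simp [momM, sum_mulVec, smul_mulVec, vecMulVec_mulVec, mul_smul]

theorem dotProduct_momM_mulVec_self (ξ : Fin (n+1) → Fin t → ℝ) (u : PIdx n t → ℝ) :
    u ⬝ᵥ momM n t ξ *ᵥ u = ∑ i, ∑ k, ξ i k * (fvec n t i k ⬝ᵥ u) ^ 2 := by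
  simp only [dotProduct_comm u, momM_mulVec, sum_dotProduct, smul_dotProduct, smul_eq_mul]
  exact Fintype.sum_congr _ _ fun i => Fintype.sum_congr _ _ fun k => by ring

theorem fvec_dotProduct (i : Fin (n+1)) (k : Fin t) (v : PIdx n t → ℝ) :
    fvec n t i k ⬝ᵥ v = v (.inl i) + v (.inr (.inl ())) + v (.inr (.inr k)) := by
  simp [dotProduct, Fintype.sum_sum_type, fvec, ite_mul]
  ring

theorem cvec_dotProduct (hn : 0 < n) (v : PIdx n t → ℝ) :
    cvec n t n ⬝ᵥ v = v (.inl (Fin.last n)) - v (.inl 0) := by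
  have hc : ∀ a : Fin (n+1), cvec n t n (.inl a) =
      (if a = Fin.last n then 1 else 0) - (if a = 0 then 1 else 0) := by
    intro a
    simp only [cvec, Fin.ext_iff, Fin.val_last, Fin.val_zero]
    split_ifs <;> simp_all
  simp only [dotProduct, Fintype.sum_sum_type, hc, sub_mul, ite_mul, one_mul, zero_mul,
    sum_sub_distrib, sum_ite_eq', mem_univ, if_true]
  simp [cvec]

theorem fvec_last_sub_fvec_zero (hn : 0 < n) (k : Fin t) :
    fvec n t (Fin.last n) k - fvec n t 0 k = cvec n t n := by
  funext j
  rcases j with a | _ | b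
  · simp only [Pi.sub_apply, fvec, cvec, Fin.ext_iff, Fin.val_last, Fin.val_zero]
    split_ifs <;> simp_all
  · simp [fvec, cvec]
  · simp [fvec, cvec]

end MomentMatrix

section Senn

variable {n : ℕ}

def sennSolution (n : ℕ) : PIdx n n → ℝ
  | .inl a => if a = Fin.last n then 2 * n else -(2 * n)
  | .inr (.inl _) => 0
  | .inr (.inr b) => if b.val + 1 = n then 0 else 2 * n

theorem fvec_dotProduct_sennSolution (i : Fin (n+1)) (k : Fin n) :
    fvec n n i k ⬝ᵥ sennSolution n = sennSolution n (.inl i) + sennSolution n (.inr (.inr k)) := by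
  simp [fvec_dotProduct, sennSolution]

theorem cvec_dotProduct_sennSolution (hn : 0 < n) : cvec n n n ⬝ᵥ sennSolution n = 4 * n := by
  have : (0 : Fin (n+1)) ≠ Fin.last n := by simp [Fin.ext_iff]; omega
  simp [cvec_dotProduct hn, sennSolution, this]
  ring

theorem sennSolution_dotProduct_momM_mulVec {ξ : Fin (n+1) → Fin n → ℝ}
    (hξ : isEscalation n n ξ) : sennSolution n ⬝ᵥ momM n n ξ *ᵥ sennSolution n = 4 * n := by
  obtain ⟨m, rfl⟩ : ∃ m, n = m + 1 :=
    Nat.exists_eq_succ_of_ne_zero (by rintro rfl; simp [isEscalation, isDesign] at hξ)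
  obtain ⟨-, hzero, hcohort⟩ := hξ
  have hterm : ∀ i k, ξ i k * (fvec (m+1) (m+1) i k ⬝ᵥ sennSolution (m+1)) ^ 2 =
      if k = Fin.last m then 4 * (m + 1) ^ 2 * ξ i k else 0 := by
    intro i k
    rw [fvec_dotProduct_sennSolution]
    by_cases hk : k = Fin.last m
    · subst hk
      simp only [sennSolution, Fin.val_last, if_true, add_zero]
      split_ifs <;> push_cast <;> ring
    · by_cases hi : i.val ≤ k.val + 1
      · have hk' : k.val < m := by simpa using Fin.val_lt_last hk
        simp only [sennSolution, Fin.ext_iff, Fin.val_last]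
        split_ifs <;> first | omega | ring
      · rw [hzero i k (by omega) (by omega)]
        simp
  rw [dotProduct_momM_mulVec_self, sum_comm]
  simp only [hterm, sum_ite_irrel, ← mul_sum, hcohort]
  simp
  field_simp

theorem momM_senn_mulVec_sennSolution (hn : 0 < n) :
    momM n n (senn n) *ᵥ sennSolution n = cvec n n n := by
  obtain ⟨m, rfl⟩ : ∃ m, n = m + 1 := Nat.exists_eq_succ_of_ne_zero hn.ne'
  have hcoef : ∀ i k, senn (m+1) i k * (fvec (m+1) (m+1) i k ⬝ᵥ sennSolution (m+1)) =
      if k = Fin.last m then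
        (if i = Fin.last (m+1) then 1 else 0) - (if i = 0 then 1 else 0) else 0 := by
    intro i k
    rw [fvec_dotProduct_sennSolution]
    have hk := k.isLt
    simp only [senn, sennSolution, Fin.ext_iff, Fin.val_last, Fin.val_zero]
    split_ifs <;> first | omega | (push_cast; field_simp; ring)
  simp only [momM_mulVec, hcoef, ite_smul, zero_smul, sum_ite_eq', mem_univ,
    if_true, sub_smul, one_smul, sum_sub_distrib]
  exact fvec_last_sub_fvec_zero hn _

end Senn

/-- c-optimality of the Senn design for estimating τₙ − τ₀ (t = n): for every
standard dose-escalation design ξ and every u with M(ξ)u = cₙ one has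
cₙ^T u ≥ 4n, and the Senn design attains the value 4n. -/
theorem stmt10 (n : ℕ) (hn : 2 ≤ n) :
    (∀ ξ : Fin (n+1) → Fin n → ℝ, isEscalation n n ξ →
      ∀ u : PIdx n n → ℝ, (momM n n ξ).mulVec u = cvec n n n →
        4 * (n : ℝ) ≤ cvec n n n ⬝ᵥ u) ∧
    (∃ u : PIdx n n → ℝ, (momM n n (senn n)).mulVec u = cvec n n n ∧
      cvec n n n ⬝ᵥ u = 4 * (n : ℝ)) := by
  have hpos : 0 < n := by omega
  refine ⟨fun ξ hξ u hu => ?_,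
    sennSolution n, momM_senn_mulVec_sennSolution hpos, cvec_dotProduct_sennSolution hpos⟩
  have hbound := (momM_posSemidef hξ.1.1).two_mul_dotProduct_sub_le hu (sennSolution n)
  rw [cvec_dotProduct_sennSolution hpos, sennSolution_dotProduct_momM_mulVec hξ] at hbound
  linarith
end
end
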